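/- (Speed bound within Theorem 4.9, eqn (4.129)) Let σ > 1 and suppose there exists an FPTW with speed v > 0. Then v ≥ 2·√(D(σ−1)β₁/δ). -/

import Mathlib

/-!
Suppose `v` were below the bound. Near the zero state `f(M, I) ≈ β₁(σ - 1) I`, so on a tail
`[Z, ∞)` the profile `I` is a nonnegative supersolution of `δD y'' + δv y' + c y ≤ 0` with
`(δv)² < 4 δD c`. This operator is oscillatory: its solution `e^{αz} sin(k(z - Z))` is positive on
a half period, and the Wronskian weighted by `e^{vz/D}` is monotone there, which forces `I Z = 0`.
But `I > 0` everywhere: a zero of `I ≥ 0` is a double zero, and since `M < 1` (by the same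
uniqueness argument for `1 - M`), `f(M, I) = O(I)` on compact sets, so Grönwall's inequality for
`(I, I')` gives `I ≡ 0`, contradicting `I → b(σ)σ` at `-∞`.
-/

noncomputable def sigmaP (α₂ β₁ β₂ : ℝ) : ℝ := α₂ / (β₁ * β₂)

noncomputable def aP (α₂ β₁ β₂ : ℝ) : ℝ := β₁ * (β₂ * sigmaP α₂ β₁ β₂ + α₂)

noncomputable def bP (α₂ β₁ β₂ : ℝ) : ℝ := β₂ / (β₂ * sigmaP α₂ β₁ β₂ + α₂)

/-- The reduced reaction function `f(M,I)`. -/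
noncomputable def fP (α₂ β₁ β₂ M I : ℝ) : ℝ :=
  aP α₂ β₁ β₂ * I * (bP α₂ β₁ β₂ * (sigmaP α₂ β₁ β₂ - 1) + bP α₂ β₁ β₂ * M - I) /
    (α₂ * I + β₂ * (1 - M))

/-- A full transition permanent form travelling wave ([FPTW]) with speed `v`:
a pair of C² profiles with values in `[0,1]²`, satisfying the travelling-wave ODEs
`M'' + v M' + I M (1 - M) = 0` and `δ (D I'' + v I') + f(M, I) = 0`, connecting
the fully saturated state `(1, b(σ)σ)` at `-∞` to the zero state `(0,0)` at `+∞`. -/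
structure IsFPTW (α₂ β₁ β₂ δ D v : ℝ) (M I : ℝ → ℝ) : Prop where
  smoothM : ContDiff ℝ 2 M
  smoothI : ContDiff ℝ 2 I
  rangeM : ∀ z, M z ∈ Set.Icc (0 : ℝ) 1
  rangeI : ∀ z, I z ∈ Set.Icc (0 : ℝ) 1
  odeM : ∀ z, deriv (deriv M) z + v * deriv M z + I z * M z * (1 - M z) = 0
  odeI : ∀ z, δ * (D * deriv (deriv I) z + v * deriv I z) + fP α₂ β₁ β₂ (M z) (I z) = 0
  limM_top : Filter.Tendsto M Filter.atTop (nhds 0)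
  limI_top : Filter.Tendsto I Filter.atTop (nhds 0)
  limM_bot : Filter.Tendsto M Filter.atBot (nhds 1)
  limI_bot : Filter.Tendsto I Filter.atBot (nhds (bP α₂ β₁ β₂ * sigmaP α₂ β₁ β₂))

open Set Real Filter Topology

theorem eq_zero_of_norm_deriv_le_mul_norm {E : Type*} [NormedAddCommGroup E] [NormedSpace ℝ E]
    {F F' : ℝ → E} {K a b : ℝ} (hF : ∀ z, HasDerivAt F (F' z) z)
    (bound : ∀ z ∈ uIcc a b, ‖F' z‖ ≤ K * ‖F z‖) (ha : F a = 0) : F b = 0 := by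
  rcases le_total a b with hab | hba
  · refine eq_zero_of_abs_deriv_le_mul_abs_self_of_eq_zero_right
      (fun z _ => (hF z).continuousAt.continuousWithinAt) (fun z _ => (hF z).hasDerivWithinAt)
      ha (fun z hz => bound z ?_) b (right_mem_Icc.2 hab)
    rw [uIcc_of_le hab]
    exact Ico_subset_Icc_self hz
  · have hG : ∀ z, HasDerivAt (fun z => F (-z)) (-F' (-z)) z := fun z => by
      simpa [Function.comp_def] using (hF (-z)).scomp z (hasDerivAt_neg z)
    have := eq_zero_of_abs_deriv_le_mul_abs_self_of_eq_zero_right (b := -b)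
      (fun z _ => (hG z).continuousAt.continuousWithinAt) (fun z _ => (hG z).hasDerivWithinAt)
      (by simpa using ha) (K := K) (fun z hz => ?_) (-b) (right_mem_Icc.2 (neg_le_neg hba))
    · simpa using this
    rw [norm_neg]
    refine bound (-z) ?_
    rw [uIcc_of_ge hba]
    constructor <;> linarith [hz.1, hz.2]

theorem eq_zero_of_abs_deriv_deriv_le {u : ℝ → ℝ} (hu : ContDiff ℝ 2 u) {L a b : ℝ}
    (bound : ∀ z ∈ uIcc a b, |deriv (deriv u) z| ≤ L * (|u z| + |deriv u z|))
    (ha : u a = 0) (ha' : deriv u a = 0) : u b = 0 := by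
  obtain ⟨hu₁, -, hu'⟩ := (contDiff_succ_iff_deriv (n := 1)).1 hu
  have hu₂ : Differentiable ℝ (deriv u) := hu'.differentiable one_ne_zero
  have hF : ∀ z, HasDerivAt (fun z => (u z, deriv u z)) (deriv u z, deriv (deriv u) z) z :=
    fun z => (hu₁ z).hasDerivAt.prodMk (hu₂ z).hasDerivAt
  have := eq_zero_of_norm_deriv_le_mul_norm hF (K := 1 + 2 * |L|) (a := a) (b := b) (fun z hz => ?_)
    (by simp [ha, ha'])
  · exact congrArg Prod.fst this
  simp only [Prod.norm_def, Real.norm_eq_abs]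
  set m := max |u z| |deriv u z|
  have hu_le : |u z| ≤ m := le_max_left _ _
  have hu'_le : |deriv u z| ≤ m := le_max_right _ _
  have hsum : L * (|u z| + |deriv u z|) ≤ |L| * (2 * m) :=
    (mul_le_mul_of_nonneg_right (le_abs_self L) (by positivity)).trans
      (mul_le_mul_of_nonneg_left (by linarith) (abs_nonneg L))
  have hm : 0 ≤ |L| * m := by positivity
  have hm0 : 0 ≤ m := (abs_nonneg _).trans hu_le
  exact max_le (by linarith) (by linarith [bound z hz])

noncomputable def dampedOscillation (α k a p q z : ℝ) : ℝ :=
  exp (α * z) * (p * sin (k * (z - a)) + q * cos (k * (z - a)))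

theorem hasDerivAt_dampedOscillation (α k a p q z : ℝ) :
    HasDerivAt (dampedOscillation α k a p q)
      (dampedOscillation α k a (α * p - k * q) (α * q + k * p) z) z := by
  have hlin : HasDerivAt (fun z => k * (z - a)) k z := by
    simpa using ((hasDerivAt_id z).sub_const a).const_mul k
  have hexp : HasDerivAt (fun z => exp (α * z)) (exp (α * z) * α) z := by
    simpa using ((hasDerivAt_id z).const_mul α).exp
  refine (hexp.mul (((hlin.sin).const_mul p).add ((hlin.cos).const_mul q))).congr_deriv ?_
  simp only [dampedOscillation, Pi.add_apply]
  ring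

theorem hasDerivAt_weightedWronskian {d v z : ℝ} (hd : d ≠ 0) {y y' y'' ψ ψ' ψ'' : ℝ → ℝ}
    (hy : HasDerivAt y (y' z) z) (hy' : HasDerivAt y' (y'' z) z)
    (hψ : HasDerivAt ψ (ψ' z) z) (hψ' : HasDerivAt ψ' (ψ'' z) z) :
    HasDerivAt (fun z => exp (v / d * z) * (ψ z * y' z - y z * ψ' z))
      (exp (v / d * z) / d * (ψ z * (d * y'' z + v * y' z) - y z * (d * ψ'' z + v * ψ' z))) z := by
  have hexp : HasDerivAt (fun z => exp (v / d * z)) (exp (v / d * z) * (v / d)) z := by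
    simpa using ((hasDerivAt_id z).const_mul (v / d)).exp
  refine (hexp.mul ((hψ.mul hy').sub (hy.mul hψ'))).congr_deriv ?_
  simp only [Pi.sub_apply, Pi.mul_apply]
  field_simp
  ring

theorem dampedOscillation_ode {d v c α k : ℝ} (hd : d ≠ 0) (hα : 2 * d * α = -v)
    (hk : (2 * d * k) ^ 2 = 4 * d * c - v ^ 2) (a z : ℝ) :
    d * dampedOscillation α k a (α ^ 2 - k ^ 2) (2 * α * k) z
      + v * dampedOscillation α k a α k z + c * dampedOscillation α k a 1 0 z = 0 := by
  have e1 : d * (α ^ 2 - k ^ 2) + v * α + c = 0 := by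
    refine (mul_eq_zero.1 ?_).resolve_left (mul_ne_zero four_ne_zero hd)
    linear_combination (2 * d * α + v) * hα - hk
  have e2 : 2 * d * α * k + v * k = 0 := by linear_combination k * hα
  simp only [dampedOscillation]
  linear_combination (exp (α * z) * sin (k * (z - a))) * e1 + (exp (α * z) * cos (k * (z - a))) * e2

theorem antitoneOn_weightedWronskian {d v c a b : ℝ} (hd : 0 < d) {y ψ ψ' ψ'' : ℝ → ℝ}
    (hy : ContDiff ℝ 2 y) (hψ : ∀ z, HasDerivAt ψ (ψ' z) z) (hψ' : ∀ z, HasDerivAt ψ' (ψ'' z) z)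
    (hψ_ode : ∀ z, d * ψ'' z + v * ψ' z + c * ψ z = 0) (hψ_nonneg : ∀ z ∈ Icc a b, 0 ≤ ψ z)
    (hsup : ∀ z ∈ Icc a b, d * deriv (deriv y) z + v * deriv y z + c * y z ≤ 0) :
    AntitoneOn (fun z => exp (v / d * z) * (ψ z * deriv y z - y z * ψ' z)) (Icc a b) := by
  obtain ⟨hy₁, -, hy'⟩ := (contDiff_succ_iff_deriv (n := 1)).1 hy
  have hy₂ : Differentiable ℝ (deriv y) := hy'.differentiable one_ne_zero
  have hW : ∀ z, HasDerivAt (fun z => exp (v / d * z) * (ψ z * deriv y z - y z * ψ' z))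
      (exp (v / d * z) / d * (ψ z * (d * deriv (deriv y) z + v * deriv y z + c * y z))) z :=
    fun z => (hasDerivAt_weightedWronskian hd.ne' (hy₁ z).hasDerivAt (hy₂ z).hasDerivAt
      (hψ z) (hψ' z)).congr_deriv (by linear_combination (-(exp (v / d * z) / d * y z)) * hψ_ode z)
  refine antitoneOn_of_hasDerivWithinAt_nonpos (convex_Icc a b)
    (fun z _ => (hW z).continuousAt.continuousWithinAt) (fun z _ => (hW z).hasDerivWithinAt)
    (fun z hz => ?_)
  rw [interior_Icc] at hz
  exact mul_nonpos_of_nonneg_of_nonpos (by positivity)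
    (mul_nonpos_of_nonneg_of_nonpos (hψ_nonneg z (Ioo_subset_Icc_self hz))
      (hsup z (Ioo_subset_Icc_self hz)))

theorem eq_zero_of_nonneg_of_supersolution {d v c : ℝ} (hd : 0 < d) (hdisc : v ^ 2 < 4 * d * c)
    {y : ℝ → ℝ} (hy : ContDiff ℝ 2 y) {a : ℝ} (hnn : ∀ z ∈ Ici a, 0 ≤ y z)
    (hsup : ∀ z ∈ Ici a, d * deriv (deriv y) z + v * deriv y z + c * y z ≤ 0) : y a = 0 := by
  set α := -v / (2 * d)
  set k := √(4 * d * c - v ^ 2) / (2 * d)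
  have hα : 2 * d * α = -v := by simp only [α]; field_simp
  have hk2 : (2 * d * k) ^ 2 = 4 * d * c - v ^ 2 := by
    simp only [k]; rw [mul_div_cancel₀ _ (by positivity), sq_sqrt (by linarith)]
  have hk : 0 < k := div_pos (sqrt_pos.2 (by linarith)) (by positivity)
  set b := a + π / k
  have hab : a ≤ b := le_add_of_nonneg_right (div_pos pi_pos hk).le
  have hψ_nonneg : ∀ z ∈ Icc a b, 0 ≤ dampedOscillation α k a 1 0 z := fun z hz => by
    refine mul_nonneg (exp_pos _).le ?_
    have : k * (z - a) ≤ π := by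
      rw [← le_div_iff₀' hk]; linarith [hz.2]
    simpa using sin_nonneg_of_nonneg_of_le_pi (mul_nonneg hk.le (by linarith [hz.1])) this
  have hW := antitoneOn_weightedWronskian hd hy
    (fun z => (hasDerivAt_dampedOscillation α k a 1 0 z).congr_deriv (by simp))
    (fun z => (hasDerivAt_dampedOscillation α k a α k z).congr_deriv
      (by simp only [dampedOscillation]; ring))
    (dampedOscillation_ode hd.ne' hα hk2 a) hψ_nonneg (fun z hz => hsup z hz.1)
    (left_mem_Icc.2 hab) (right_mem_Icc.2 hab) hab
  -- `ψ` vanishes at both ends of the half period and `ψ' = ±k e^{αz}` there, so `hW` reads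
  -- `e^{vb/d} e^{αb} k y b ≤ -e^{va/d} e^{αa} k y a`.
  have hkb : k * (b - a) = π := by simp only [b]; field_simp; ring
  simp only [dampedOscillation, sub_self, mul_zero, sin_zero, cos_zero, hkb, sin_pi,
    cos_pi] at hW
  have hyb := hnn b hab
  have hP : 0 < exp (v / d * a) * exp (α * a) * k := by positivity
  have hWb : 0 ≤ exp (v / d * b) * exp (α * b) * k * y b := by positivity
  refine le_antisymm (nonpos_of_mul_nonpos_right ?_ hP) (hnn a self_mem_Ici)
  linarith

theorem aP_mul_bP {α₂ β₁ β₂ : ℝ} (h : β₂ * sigmaP α₂ β₁ β₂ + α₂ ≠ 0) :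
    aP α₂ β₁ β₂ * bP α₂ β₁ β₂ = β₁ * β₂ := by
  unfold aP bP
  field_simp

theorem eventually_mul_le_fP {α₂ β₁ β₂ c : ℝ} (hβ₂ : β₂ ≠ 0)
    (hden : β₂ * sigmaP α₂ β₁ β₂ + α₂ ≠ 0) (hc : c < (sigmaP α₂ β₁ β₂ - 1) * β₁) :
    ∀ᶠ p : ℝ × ℝ in 𝓝 0, 0 ≤ p.2 → c * p.2 ≤ fP α₂ β₁ β₂ p.1 p.2 := by
  set r : ℝ × ℝ → ℝ := fun p => aP α₂ β₁ β₂ *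
    (bP α₂ β₁ β₂ * (sigmaP α₂ β₁ β₂ - 1) + bP α₂ β₁ β₂ * p.1 - p.2) / (α₂ * p.2 + β₂ * (1 - p.1))
  have hr : ContinuousAt r 0 := by
    refine ContinuousAt.div (by fun_prop) (by fun_prop) ?_
    simpa using hβ₂
  have hr0 : r 0 = (sigmaP α₂ β₁ β₂ - 1) * β₁ := by
    simp only [r, Prod.fst_zero, Prod.snd_zero, mul_zero, add_zero, sub_zero, zero_add, mul_one]
    rw [div_eq_iff hβ₂]
    linear_combination (sigmaP α₂ β₁ β₂ - 1) * aP_mul_bP hden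
  filter_upwards [hr.eventually (lt_mem_nhds (hr0 ▸ hc))] with p hp hp2
  have : fP α₂ β₁ β₂ p.1 p.2 = p.2 * r p := by simp only [fP, r]; ring
  rw [this, mul_comm]
  exact mul_le_mul_of_nonneg_left hp.le hp2

theorem abs_fP_le {α₂ β₁ β₂ η M I : ℝ} (hα₂ : 0 ≤ α₂) (hβ₂ : 0 < β₂) (hη : 0 < η)
    (hM : M ∈ Icc 0 (1 - η)) (hI : I ∈ Icc 0 1) :
    |fP α₂ β₁ β₂ M I| ≤ |aP α₂ β₁ β₂| * (|bP α₂ β₁ β₂ * (sigmaP α₂ β₁ β₂ - 1)| + |bP α₂ β₁ β₂| + 1)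
      / (β₂ * η) * I := by
  have hden : β₂ * η ≤ α₂ * I + β₂ * (1 - M) := by nlinarith [hM.2, hI.1]
  have hnum : |bP α₂ β₁ β₂ * (sigmaP α₂ β₁ β₂ - 1) + bP α₂ β₁ β₂ * M - I|
      ≤ |bP α₂ β₁ β₂ * (sigmaP α₂ β₁ β₂ - 1)| + |bP α₂ β₁ β₂| + 1 := by
    have hbM : |bP α₂ β₁ β₂ * M| ≤ |bP α₂ β₁ β₂| := by
      rw [abs_mul]
      exact mul_le_of_le_one_right (abs_nonneg _)
        (abs_le.2 ⟨by linarith [hM.1], by linarith [hM.2]⟩)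
    have hI' : |I| ≤ 1 := abs_le.2 ⟨by linarith [hI.1], hI.2⟩
    calc _ ≤ |bP α₂ β₁ β₂ * (sigmaP α₂ β₁ β₂ - 1) + bP α₂ β₁ β₂ * M| + |I| := abs_sub _ _
      _ ≤ _ := by linarith [abs_add_le (bP α₂ β₁ β₂ * (sigmaP α₂ β₁ β₂ - 1)) (bP α₂ β₁ β₂ * M)]
  rw [fP, abs_div, abs_mul, abs_mul, abs_of_nonneg hI.1,
    abs_of_pos ((mul_pos hβ₂ hη).trans_le hden), div_mul_eq_mul_div, mul_right_comm]
  have hI0 := hI.1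
  exact div_le_div₀ (by positivity)
    (mul_le_mul_of_nonneg_right (mul_le_mul_of_nonneg_left hnum (abs_nonneg _)) hI0)
    (mul_pos hβ₂ hη) hden

namespace IsFPTW

variable {α₂ β₁ β₂ δ D v : ℝ} {M I : ℝ → ℝ}

theorem M_lt_one (h : IsFPTW α₂ β₁ β₂ δ D v M I) (z : ℝ) : M z < 1 := by
  refine (h.rangeM z).2.lt_of_ne fun hz => ?_
  have hmax : IsLocalMax M z := Eventually.of_forall fun w => hz ▸ (h.rangeM w).2
  set u := fun w => 1 - M w
  have hu' : deriv u = fun w => -deriv M w := funext fun w => deriv_const_sub 1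
  have hu'' : deriv (deriv u) = fun w => -deriv (deriv M) w := by
    rw [hu']; funext w; exact deriv.neg
  have hbound : ∀ w, |deriv (deriv u) w| ≤ (|v| + 1) * (|u w| + |deriv u w|) := fun w => by
    obtain ⟨hM0, hM1⟩ := h.rangeM w
    obtain ⟨hI0, hI1⟩ := h.rangeI w
    have hIM : |I w * M w| ≤ 1 := by
      rw [abs_of_nonneg (mul_nonneg hI0 hM0)]; exact mul_le_one₀ hI1 hM0 hM1
    rw [hu'', hu']
    simp only [u, abs_neg]
    calc |deriv (deriv M) w| = |v * -deriv M w - I w * M w * (1 - M w)| := by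
          congr 1; linear_combination h.odeM w
      _ ≤ |v| * |deriv M w| + 1 * |1 - M w| := by
          refine (abs_sub _ _).trans ?_
          rw [abs_mul, abs_mul, abs_neg]
          gcongr
      _ ≤ (|v| + 1) * (|1 - M w| + |deriv M w|) := by
          nlinarith [abs_nonneg v, abs_nonneg (deriv M w), abs_nonneg (1 - M w)]
  have hM_one : M = fun _ => 1 := funext fun w => (sub_eq_zero.1 <|
    eq_zero_of_abs_deriv_deriv_le (a := z) (b := w) (contDiff_const.sub h.smoothM)
      (fun w _ => hbound w) (by simp [hz]) (by simp [hmax.deriv_eq_zero])).symm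
  have := tendsto_nhds_unique h.limM_top (hM_one ▸ tendsto_const_nhds)
  norm_num at this

theorem I_eq_zero_of_eq_zero (h : IsFPTW α₂ β₁ β₂ δ D v M I) (hα₂ : 0 ≤ α₂) (hβ₂ : 0 < β₂)
    (hδ : δ ≠ 0) (hD : D ≠ 0) {z₀ : ℝ} (hz₀ : I z₀ = 0) (z : ℝ) : I z = 0 := by
  obtain ⟨w, -, hw⟩ := (isCompact_uIcc (a := z₀) (b := z)).exists_isMinOn nonempty_uIcc
    (f := fun x => 1 - M x) (continuous_const.sub h.smoothM.continuous).continuousOn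
  set η := 1 - M w
  have hη : 0 < η := sub_pos.2 (h.M_lt_one w)
  set K := |aP α₂ β₁ β₂| * (|bP α₂ β₁ β₂ * (sigmaP α₂ β₁ β₂ - 1)| + |bP α₂ β₁ β₂| + 1) / (β₂ * η)
  have hK : 0 ≤ K := by positivity
  have hMη : ∀ x ∈ uIcc z₀ z, M x ≤ 1 - η := fun x hx => by
    have : 1 - M w ≤ 1 - M x := hw hx
    linarith
  have hf : ∀ x ∈ uIcc z₀ z, |fP α₂ β₁ β₂ (M x) (I x)| ≤ K * |I x| := fun x hx => by
    rw [abs_of_nonneg (h.rangeI x).1]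
    exact abs_fP_le hα₂ hβ₂ hη ⟨(h.rangeM x).1, hMη x hx⟩ (h.rangeI x)
  have hmin : IsLocalMin I z₀ := Eventually.of_forall fun x => hz₀ ▸ (h.rangeI x).1
  refine eq_zero_of_abs_deriv_deriv_le h.smoothI (L := (|v| + K / |δ|) / |D|)
    (fun x hx => ?_) hz₀ hmin.deriv_eq_zero
  have hDI : D * deriv (deriv I) x = -(v * deriv I x) - fP α₂ β₁ β₂ (M x) (I x) / δ := by
    field_simp
    linear_combination h.odeI x
  rw [div_mul_eq_mul_div, le_div_iff₀ (abs_pos.2 hD), mul_comm, ← abs_mul, hDI]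
  calc |-(v * deriv I x) - fP α₂ β₁ β₂ (M x) (I x) / δ|
      ≤ |v| * |deriv I x| + K * |I x| / |δ| := by
        refine (abs_sub _ _).trans ?_
        rw [abs_neg, abs_mul, abs_div]
        gcongr
        exact hf x hx
    _ ≤ (|v| + K / |δ|) * (|I x| + |deriv I x|) := by
        have : 0 ≤ K / |δ| := by positivity
        rw [mul_div_right_comm]
        nlinarith [abs_nonneg v, abs_nonneg (I x), abs_nonneg (deriv I x)]

theorem I_pos (h : IsFPTW α₂ β₁ β₂ δ D v M I) (hα₂ : 0 ≤ α₂) (hβ₂ : 0 < β₂) (hδ : δ ≠ 0)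
    (hD : D ≠ 0) (hlim : bP α₂ β₁ β₂ * sigmaP α₂ β₁ β₂ ≠ 0) (z : ℝ) : 0 < I z := by
  refine (h.rangeI z).1.lt_of_ne' fun hz => hlim ?_
  have hI : I = fun _ => 0 := funext (h.I_eq_zero_of_eq_zero hα₂ hβ₂ hδ hD hz)
  exact tendsto_nhds_unique h.limI_bot (hI ▸ tendsto_const_nhds)

end IsFPTW

theorem fptw_speed_bound_general (α₂ β₁ β₂ δ D v : ℝ)
    (hα₂ : 0 < α₂) (hβ₂ : 0 < β₂) (hD : 0 < D) (hδ : 0 < δ)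
    (hσ : 1 < sigmaP α₂ β₁ β₂)
    (hv : 0 < v) (M I : ℝ → ℝ) (h : IsFPTW α₂ β₁ β₂ δ D v M I) :
    v ≥ 2 * Real.sqrt (D * (sigmaP α₂ β₁ β₂ - 1) * β₁ / δ) := by
  by_contra! hslow
  have hσ₀ : 0 < sigmaP α₂ β₁ β₂ := one_pos.trans hσ
  have hden : 0 < β₂ * sigmaP α₂ β₁ β₂ + α₂ := by positivity
  have hspeed : δ * v ^ 2 / (4 * D) < (sigmaP α₂ β₁ β₂ - 1) * β₁ := by
    have := (Real.lt_sqrt (y := D * (sigmaP α₂ β₁ β₂ - 1) * β₁ / δ) (by positivity)).1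
      (by linarith : v / 2 < _)
    rw [lt_div_iff₀ hδ] at this
    rw [div_lt_iff₀ (by positivity)]
    linarith
  obtain ⟨c, hvc, hc⟩ := exists_between hspeed
  have hdisc : (δ * v) ^ 2 < 4 * (δ * D) * c := by
    rw [div_lt_iff₀ (by positivity)] at hvc
    nlinarith
  obtain ⟨Z, hZ⟩ := eventually_atTop.1 <| (h.limM_top.prodMk_nhds h.limI_top).eventually
    (eventually_mul_le_fP hβ₂.ne' hden.ne' hc)
  have hIZ : I Z = 0 := eq_zero_of_nonneg_of_supersolution (mul_pos hδ hD) hdisc h.smoothI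
    (fun z _ => (h.rangeI z).1) fun z hz => by linarith [h.odeI z, hZ z hz (h.rangeI z).1]
  have hbσ : bP α₂ β₁ β₂ * sigmaP α₂ β₁ β₂ ≠ 0 := by unfold bP; positivity
  exact (h.I_pos hα₂.le hβ₂ hδ.ne' hD.ne' hbσ Z).ne' hIZ

/-- Speed bound (4.129) in the proof of Theorem 4.9: for `σ > 1`, any [FPTW] speed `v`
satisfies `v ≥ 2 √(D (σ - 1) β₁ / δ)`. -/
theorem fptw_speed_bound (α₂ β₁ β₂ δ D v : ℝ)
    (hα₂ : 0 < α₂) (hβ₁ : 0 < β₁) (hβ₂ : 0 < β₂) (hD : 0 < D) (hδ : 0 < δ)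
    (hσ : 1 < sigmaP α₂ β₁ β₂)
    (hv : 0 < v) (M I : ℝ → ℝ) (h : IsFPTW α₂ β₁ β₂ δ D v M I) :
    v ≥ 2 * Real.sqrt (D * (sigmaP α₂ β₁ β₂ - 1) * β₁ / δ) :=
  fptw_speed_bound_general α₂ β₁ β₂ δ D v hα₂ hβ₂ hD hδ hσ hv M I h
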